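/- arXiv:1101.5091 — 4 statements merged into one kernel-verified Lean document; each statement's English description precedes it below -/
import Mathlib

section
/- Let 𝒳 be a nonempty finite type and for m = 1, 2 let η_m : 𝒳 → ℝ^{p_m} be a potential function, defining the Gibbs random field likelihood f_m(y|θ_m) = exp(⟨θ_m, η_m(y)⟩) / Σ_{z ∈ 𝒳} exp(⟨θ_m, η_m(z)⟩) for θ_m ∈ ℝ^{p_m}. Let η(y) = (η_1(y), η_2(y)) be the concatenated statistic. Then for any y ∈ 𝒳 and any prior probability measures π_1 on ℝ^{p_1} and π_2 on ℝ^{p_2} for which all the integrals below are finite and the denominators nonzero, the exact Bayes factor equals the Bayes factor based on η: (∫ f_1(y|θ_1) dπ_1) / (∫ f_2(y|θ_2) dπ_2) = (∫ P_{θ_1}^{(1)}[η(Z) = η(y)] dπ_1) / (∫ P_{θ_2}^{(2)}[η(Z) = η(y)] dπ_2), where P_θ^{(m)}[η(Z) = η(y)] = Σ_{z : η(z) = η(y)} f_m(z|θ). -/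
open MeasureTheory Matrix Finset

/-! A Gibbs likelihood `f(y | θ)` depends on `y` only through its potential `η(y)`, so it is
constant on every fibre of `η = (η₁, η₂)`. The probability that `η(Z) = η(y)` is therefore
`#{z : η(z) = η(y)} · f_m(y | θ)` in both models, and the common factor cancels from the ratio
of the integrated likelihoods. -/

theorem gibbs_likelihood_congr {𝒳 : Type*} [Fintype 𝒳] {p : ℕ} {η : 𝒳 → Fin p → ℝ}
    {f : 𝒳 → (Fin p → ℝ) → ℝ}
    (hf : ∀ y θ, f y θ = Real.exp (θ ⬝ᵥ η y) / ∑ z : 𝒳, Real.exp (θ ⬝ᵥ η z))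
    {y z : 𝒳} (h : η z = η y) : f z = f y := by
  funext θ
  rw [hf, hf, h]

theorem integral_finset_sum_eq_card_mul {ι Θ : Type*} [MeasurableSpace Θ] {μ : Measure Θ}
    {s : Finset ι} {f : ι → Θ → ℝ} {y : ι} (h : ∀ z ∈ s, f z = f y) :
    ∫ θ, ∑ z ∈ s, f z θ ∂μ = #s * ∫ θ, f y θ ∂μ := by
  have hsum : ∀ θ, ∑ z ∈ s, f z θ = #s * f y θ := fun θ => by
    rw [sum_eq_card_nsmul fun z hz => congrFun (h z hz) θ, nsmul_eq_mul]
  simp_rw [hsum]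
  exact integral_const_mul _ _

theorem gibbs_random_field_bayes_factor_exact_general
    {𝒳 : Type*} [Fintype 𝒳]
    {p₁ p₂ : ℕ} (η₁ : 𝒳 → (Fin p₁ → ℝ)) (η₂ : 𝒳 → (Fin p₂ → ℝ))
    (f₁ : 𝒳 → (Fin p₁ → ℝ) → ℝ) (f₂ : 𝒳 → (Fin p₂ → ℝ) → ℝ)
    (hf₁ : ∀ y θ, f₁ y θ = Real.exp (θ ⬝ᵥ η₁ y) / ∑ z : 𝒳, Real.exp (θ ⬝ᵥ η₁ z))
    (hf₂ : ∀ y θ, f₂ y θ = Real.exp (θ ⬝ᵥ η₂ y) / ∑ z : 𝒳, Real.exp (θ ⬝ᵥ η₂ z))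
    (π₁ : Measure (Fin p₁ → ℝ)) (π₂ : Measure (Fin p₂ → ℝ))
    (y : 𝒳) :
    (∫ θ, f₁ y θ ∂π₁) / (∫ θ, f₂ y θ ∂π₂)
      = (∫ θ, (∑ z ∈ univ.filter (fun z : 𝒳 => η₁ z = η₁ y ∧ η₂ z = η₂ y), f₁ z θ) ∂π₁) /
        (∫ θ, (∑ z ∈ univ.filter (fun z : 𝒳 => η₁ z = η₁ y ∧ η₂ z = η₂ y), f₂ z θ) ∂π₂) := by
  set S := univ.filter (fun z : 𝒳 => η₁ z = η₁ y ∧ η₂ z = η₂ y)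
  have hyS : y ∈ S := by simp [S]
  have hS₁ : ∀ z ∈ S, f₁ z = f₁ y := fun z hz => gibbs_likelihood_congr hf₁ (mem_filter.1 hz).2.1
  have hS₂ : ∀ z ∈ S, f₂ z = f₂ y := fun z hz => gibbs_likelihood_congr hf₂ (mem_filter.1 hz).2.2
  have hcard : (#S : ℝ) ≠ 0 := by exact_mod_cast (card_ne_zero_of_mem hyS)
  rw [integral_finset_sum_eq_card_mul hS₁, integral_finset_sum_eq_card_mul hS₂,
    mul_div_mul_left _ _ hcard]

/-- For two Gibbs random fields on a finite state space `𝒳`, with potentials `η₁, η₂`, the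
exact Bayes factor equals the Bayes factor based on the concatenated statistic
`η(y) = (η₁(y), η₂(y))`: the concatenation of the model-wise sufficient statistics is
sufficient across models. -/
theorem gibbs_random_field_bayes_factor_exact
    {𝒳 : Type*} [Fintype 𝒳] [Nonempty 𝒳] [DecidableEq 𝒳]
    {p₁ p₂ : ℕ} (η₁ : 𝒳 → (Fin p₁ → ℝ)) (η₂ : 𝒳 → (Fin p₂ → ℝ))
    (f₁ : 𝒳 → (Fin p₁ → ℝ) → ℝ) (f₂ : 𝒳 → (Fin p₂ → ℝ) → ℝ)
    (hf₁ : ∀ y θ, f₁ y θ = Real.exp (θ ⬝ᵥ η₁ y) / ∑ z : 𝒳, Real.exp (θ ⬝ᵥ η₁ z))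
    (hf₂ : ∀ y θ, f₂ y θ = Real.exp (θ ⬝ᵥ η₂ y) / ∑ z : 𝒳, Real.exp (θ ⬝ᵥ η₂ z))
    (π₁ : Measure (Fin p₁ → ℝ)) (π₂ : Measure (Fin p₂ → ℝ))
    [IsProbabilityMeasure π₁] [IsProbabilityMeasure π₂]
    (y : 𝒳)
    (hint₁ : Integrable (fun θ => f₁ y θ) π₁)
    (hint₂ : Integrable (fun θ => f₂ y θ) π₂)
    (hintη₁ : Integrable
      (fun θ => ∑ z ∈ univ.filter (fun z : 𝒳 => η₁ z = η₁ y ∧ η₂ z = η₂ y), f₁ z θ) π₁)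
    (hintη₂ : Integrable
      (fun θ => ∑ z ∈ univ.filter (fun z : 𝒳 => η₁ z = η₁ y ∧ η₂ z = η₂ y), f₂ z θ) π₂)
    (hden : ∫ θ, f₂ y θ ∂π₂ ≠ 0)
    (hdenη : ∫ θ, (∑ z ∈ univ.filter (fun z : 𝒳 => η₁ z = η₁ y ∧ η₂ z = η₂ y), f₂ z θ)
      ∂π₂ ≠ 0) :
    (∫ θ, f₁ y θ ∂π₁) / (∫ θ, f₂ y θ ∂π₂)
      = (∫ θ, (∑ z ∈ univ.filter (fun z : 𝒳 => η₁ z = η₁ y ∧ η₂ z = η₂ y), f₁ z θ) ∂π₁) /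
        (∫ θ, (∑ z ∈ univ.filter (fun z : 𝒳 => η₁ z = η₁ y ∧ η₂ z = η₂ y), f₂ z θ) ∂π₂) :=
  gibbs_random_field_bayes_factor_exact_general η₁ η₂ f₁ f₂ hf₁ hf₂ π₁ π₂ y
end

section
/- Let θ_0 > 0 and let (S_n)_{n≥1} be a sequence of natural numbers with S_n/n → θ_0. Then (1 + 1/n)^{-S_n} · (S_n + n)(S_n + n + 1) / (n(n+1)) → e^{-θ_0} (θ_0 + 1)^2 as n → ∞. In particular the limit is a finite, strictly positive constant. -/
open Filter Topology

/-
Writing `(1 + 1/n)^{Sₙ} = exp ((Sₙ/n) · n log(1 + 1/n))` and using `n log(1 + 1/n) → 1`, the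
exponential factor tends to `e^{-θ₀}`. The rational factor is `(Sₙ/n + 1)(Sₙ/(n+1) + 1)`, and both
ratios tend to `θ₀`.
-/

theorem tendsto_div_add_one_of_tendsto_div {θ : ℝ} {f : ℕ → ℝ}
    (hf : Tendsto (fun n : ℕ => f n / n) atTop (𝓝 θ)) :
    Tendsto (fun n : ℕ => f n / (n + 1)) atTop (𝓝 θ) := by
  have h := hf.mul (tendsto_natCast_div_add_atTop (1 : ℝ))
  rw [mul_one] at h
  refine h.congr' ?_
  filter_upwards [eventually_ne_atTop 0] with n hn
  have : (n : ℝ) ≠ 0 := Nat.cast_ne_zero.mpr hn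
  field_simp

theorem tendsto_one_add_inv_pow_of_tendsto_div {θ : ℝ} {S : ℕ → ℕ}
    (hS : Tendsto (fun n : ℕ => (S n : ℝ) / n) atTop (𝓝 θ)) :
    Tendsto (fun n : ℕ => (1 + 1 / (n : ℝ)) ^ S n) atTop (𝓝 (Real.exp θ)) := by
  have hlog : Tendsto (fun n : ℕ => (n : ℝ) * Real.log (1 + 1 / n)) atTop (𝓝 1) :=
    (Real.tendsto_mul_log_one_add_div_atTop 1).comp tendsto_natCast_atTop_atTop
  have h := (Real.continuous_exp.tendsto θ).comp (by simpa using hS.mul hlog)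
  refine h.congr' ?_
  filter_upwards [eventually_gt_atTop 0] with n hn
  have hn' : (n : ℝ) ≠ 0 := by positivity
  have hpos : (0 : ℝ) < 1 + 1 / n := by positivity
  have hcancel : (S n : ℝ) / n * (n * Real.log (1 + 1 / n)) = S n * Real.log (1 + 1 / n) := by
    field_simp
  rw [Function.comp_apply, ← one_div, hcancel, Real.exp_nat_mul, Real.exp_log hpos]

/-- If `Sₙ/n → θ₀ > 0`, then the closed-form Bayes factor
`(1 + 1/n)^{-Sₙ} (Sₙ+n)(Sₙ+n+1)/(n(n+1))` converges to `e^{-θ₀}(θ₀+1)²`, a finite strictly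
positive constant. -/
theorem bayes_factor_limit_of_slln
    (θ₀ : ℝ) (hθ₀ : 0 < θ₀) (S : ℕ → ℕ)
    (hS : Tendsto (fun n : ℕ => (S n : ℝ) / n) atTop (nhds θ₀)) :
    Tendsto
      (fun n : ℕ =>
        ((1 + 1 / (n : ℝ)) ^ (S n))⁻¹ *
          (((S n : ℝ) + n) * ((S n : ℝ) + n + 1)) / ((n : ℝ) * ((n : ℝ) + 1)))
      atTop (nhds (Real.exp (-θ₀) * (θ₀ + 1) ^ 2)) ∧
    0 < Real.exp (-θ₀) * (θ₀ + 1) ^ 2 := by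
  refine ⟨?_, by positivity⟩
  have hexp := (tendsto_one_add_inv_pow_of_tendsto_div hS).inv₀ (Real.exp_pos θ₀).ne'
  have hrat := (hS.add_const 1).mul ((tendsto_div_add_one_of_tendsto_div hS).add_const 1)
  have h := hexp.mul hrat
  rw [← Real.exp_neg, ← sq] at h
  refine h.congr' ?_
  filter_upwards [eventually_gt_atTop 0] with n hn
  have hn' : (n : ℝ) ≠ 0 := by positivity
  field_simp
  ring
end

section
/- Under the assumptions of Theorem 1 (y_1, y_2, … i.i.d. integrable ℕ-valued with mean θ_0 > 0, S_n = Σ_{i=1}^n y_i, and B_{12}^η(S_n) the Bayes factor based on S_n between the Poisson/Exponential(1) model and the geometric/Uniform(0,1) model), the Bayes factor based on the sufficient statistic is not consistent: almost surely, B_{12}^η(S_n) converges to a finite strictly positive constant, so it neither tends to ∞ nor to 0; in particular, it does not tend to ∞ when the data are i.i.d. Poisson and does not tend to 0 when the data are i.i.d. geometric. -/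
/-!
Both marginal likelihoods of `S = S_n` are explicit. The Gamma integral gives
`n ^ S / (n + 1) ^ (S + 1)` for the Poisson model and the Beta integral gives
`n / ((n + S) (n + S + 1))` for the geometric one, so
`B₁₂(S) = (n / (n + 1)) ^ S · (n + S) / n · (n + S + 1) / (n + 1)`.
By the strong law `S_n / n → θ₀` almost surely, and then
`B₁₂(S_n) → e^{-θ₀} (1 + θ₀)²`, a finite positive limit.
-/

open MeasureTheory Filter ProbabilityTheory
open scoped Nat

theorem integral_exp_neg_mul_pow_div_factorial_mul_exp_neg {a : ℝ} (ha : 0 ≤ a) (S : ℕ) :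
    ∫ lam in Set.Ioi (0 : ℝ),
        Real.exp (-(a * lam)) * (a * lam) ^ S / (S ! : ℝ) * Real.exp (-lam)
      = a ^ S / (a + 1) ^ (S + 1) := by
  have gamma := Real.integral_rpow_mul_exp_neg_mul_Ioi (a := S + 1) (r := a + 1)
    (by positivity) (by positivity)
  rw [add_sub_cancel_right, Real.Gamma_nat_eq_factorial, ← Nat.cast_succ, Real.rpow_natCast,
    one_div, inv_pow] at gamma
  calc _ = a ^ S / (S ! : ℝ) *
        ∫ lam in Set.Ioi (0 : ℝ), lam ^ (S : ℝ) * Real.exp (-((a + 1) * lam)) := by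
        rw [← integral_const_mul]
        refine setIntegral_congr_fun measurableSet_Ioi fun lam _ => ?_
        rw [Real.rpow_natCast, show -((a + 1) * lam) = -(a * lam) + -lam by ring, Real.exp_add]
        ring
    _ = a ^ S / (a + 1) ^ (S + 1) := by
        rw [gamma]
        field_simp

theorem integral_pow_mul_one_sub_pow (S n : ℕ) :
    ∫ p in (0 : ℝ)..1, p ^ S * (1 - p) ^ n = (S ! * n ! : ℝ) / (S + n + 1)! := by
  have beta := Complex.betaIntegral_eq_Gamma_mul_div (S + 1) (n + 1)
    (by norm_cast; positivity) (by norm_cast; positivity)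
  rw [show (S + 1 + (n + 1) : ℂ) = (S + n + 1 : ℕ) + 1 by push_cast; ring,
    Complex.Gamma_nat_eq_factorial, Complex.Gamma_nat_eq_factorial,
    Complex.Gamma_nat_eq_factorial, Complex.betaIntegral] at beta
  simp only [add_sub_cancel_right, Complex.cpow_natCast] at beta
  rw [← Complex.ofReal_inj, ← intervalIntegral.integral_ofReal]
  push_cast at beta ⊢
  exact beta

theorem integral_choose_mul_pow_mul_one_sub_pow {n : ℕ} (hn : 0 < n) (S : ℕ) :
    ∫ p in (0 : ℝ)..1, ((n + S - 1).choose S : ℝ) * p ^ S * (1 - p) ^ n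
      = n / ((n + S) * (n + S + 1)) := by
  obtain ⟨m, rfl⟩ : ∃ m, n = m + 1 := ⟨n - 1, by omega⟩
  have choose_eq : ((m + S).choose S * m ! * S ! : ℝ) = (m + S)! := by
    exact_mod_cast Nat.add_choose_mul_factorial_mul_factorial m S
  have choose_ne_zero : ((m + S).choose S : ℝ) ≠ 0 := by
    exact_mod_cast (Nat.choose_pos (Nat.le_add_left S m)).ne'
  have factorial_eq : ((S + (m + 1) + 1)! : ℝ) = (m + S + 2) * (m + S + 1) * (m + S)! := by
    rw [show S + (m + 1) + 1 = m + S + 1 + 1 by omega, Nat.factorial_succ, Nat.factorial_succ]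
    push_cast
    ring
  simp_rw [mul_assoc, intervalIntegral.integral_const_mul]
  rw [integral_pow_mul_one_sub_pow, factorial_eq, ← choose_eq,
    show m + 1 + S - 1 = m + S by omega, Nat.factorial_succ]
  push_cast
  field_simp
  ring

theorem poisson_geometric_bayesFactor_eq {n : ℕ} (hn : 0 < n) (S : ℕ) :
    (∫ lam in Set.Ioi (0 : ℝ),
        Real.exp (-(n * lam)) * (n * lam) ^ S / (S ! : ℝ) * Real.exp (-lam)) /
      (∫ p in (0 : ℝ)..1, ((n + S - 1).choose S : ℝ) * p ^ S * (1 - p) ^ n)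
      = ((n : ℝ) / (n + 1)) ^ S * ((n + S) / n) * ((n + S + 1) / (n + 1)) := by
  rw [integral_exp_neg_mul_pow_div_factorial_mul_exp_neg n.cast_nonneg,
    integral_choose_mul_pow_mul_one_sub_pow hn]
  have : (n : ℝ) ≠ 0 := by positivity
  rw [div_pow]
  field_simp
  ring

theorem tendsto_div_add_one_pow_of_tendsto_div {s : ℕ → ℕ} {θ : ℝ}
    (hs : Tendsto (fun n => (s n : ℝ) / n) atTop (nhds θ)) :
    Tendsto (fun n : ℕ => ((n : ℝ) / (n + 1)) ^ s n) atTop (nhds (Real.exp (-θ))) := by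
  -- `(n / (n + 1)) ^ s = exp (-(s / n) * (n * log (1 + 1 / n)))` and `n * log (1 + 1 / n) → 1`
  have log_lim : Tendsto (fun n : ℕ => (n : ℝ) * Real.log (1 + 1 / n)) atTop (nhds 1) :=
    (Real.tendsto_mul_log_one_add_div_atTop 1).comp tendsto_natCast_atTop_atTop
  have exp_lim := (Real.continuous_exp.tendsto _).comp ((hs.mul log_lim).neg)
  rw [mul_one] at exp_lim
  refine exp_lim.congr' ?_
  filter_upwards [eventually_gt_atTop 0] with n hn
  have hn' : (0 : ℝ) < n := by exact_mod_cast hn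
  rw [Function.comp_apply, ← Real.exp_log (by positivity : (0 : ℝ) < n / (n + 1)),
    ← Real.exp_nat_mul, show (n : ℝ) / (n + 1) = (1 + 1 / (n : ℝ))⁻¹ by field_simp,
    Real.log_inv]
  congr 1
  field_simp

theorem tendsto_add_div_add_of_tendsto_div {s : ℕ → ℕ} {θ : ℝ}
    (hs : Tendsto (fun n => (s n : ℝ) / n) atTop (nhds θ)) {k : ℝ} (hk : 0 ≤ k) :
    Tendsto (fun n : ℕ => ((n : ℝ) + s n + k) / (n + k)) atTop (nhds (1 + θ)) := by
  have lim := (hs.mul (tendsto_natCast_div_add_atTop k)).const_add 1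
  rw [mul_one] at lim
  refine lim.congr' ?_
  filter_upwards [eventually_gt_atTop 0] with n hn
  have hn' : (0 : ℝ) < n := by exact_mod_cast hn
  have : (n : ℝ) + k ≠ 0 := by positivity
  field_simp
  ring

theorem tendsto_poisson_geometric_bayesFactor {s : ℕ → ℕ} {θ : ℝ}
    (hs : Tendsto (fun n => (s n : ℝ) / n) atTop (nhds θ)) :
    Tendsto (fun n : ℕ =>
        ((n : ℝ) / (n + 1)) ^ s n * ((n + s n) / n) * ((n + s n + 1) / (n + 1)))
      atTop (nhds (Real.exp (-θ) * (1 + θ) * (1 + θ))) := by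
  have ratio_lim := tendsto_add_div_add_of_tendsto_div hs le_rfl
  simp only [add_zero] at ratio_lim
  exact ((tendsto_div_add_one_pow_of_tendsto_div hs).mul ratio_lim).mul
    (tendsto_add_div_add_of_tendsto_div hs zero_le_one)

theorem ae_tendsto_sum_range_div {Ω : Type*} [MeasurableSpace Ω] {P : Measure Ω}
    {y : ℕ → Ω → ℕ} (hindep : iIndepFun y P) (hident : ∀ i, IdentDistrib (y i) (y 0) P P)
    (hint : Integrable (fun ω => (y 0 ω : ℝ)) P) :
    ∀ᵐ ω ∂P, Tendsto (fun n => ((∑ i ∈ Finset.range n, y i ω : ℕ) : ℝ) / n) atTop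
      (nhds (∫ ω, (y 0 ω : ℝ) ∂P)) := by
  have hindep_real :
      Pairwise fun i j => IndepFun (fun ω => (y i ω : ℝ)) (fun ω => (y j ω : ℝ)) P :=
    fun i j hij => (hindep.indepFun hij).comp measurable_from_top measurable_from_top
  simpa only [Nat.cast_sum] using strong_law_ae_real (fun i ω => (y i ω : ℝ)) hint hindep_real
    fun i => (hident i).comp measurable_from_top

theorem bayes_factor_sufficient_statistic_inconsistent_general
    {Ω : Type*} [MeasurableSpace Ω] (P : Measure Ω)
    (y : ℕ → Ω → ℕ)
    (hindep : iIndepFun y P)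
    (hident : ∀ i, IdentDistrib (y i) (y 0) P P)
    (hint : Integrable (fun ω => (y 0 ω : ℝ)) P)
    (θ₀ : ℝ) (hθ₀ : 0 < θ₀) (hmean : ∫ ω, (y 0 ω : ℝ) ∂P = θ₀)
    (B : ℕ → Ω → ℝ)
    (hB : ∀ n ω, B n ω =
      (∫ lam in Set.Ioi (0 : ℝ),
          Real.exp (-(n * lam)) * (n * lam) ^ (∑ i ∈ Finset.range n, y i ω) /
            (Nat.factorial (∑ i ∈ Finset.range n, y i ω) : ℝ) * Real.exp (-lam)) /
      (∫ p in (0 : ℝ)..1,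
          (Nat.choose (n + (∑ i ∈ Finset.range n, y i ω) - 1)
              (∑ i ∈ Finset.range n, y i ω) : ℝ) *
            p ^ (∑ i ∈ Finset.range n, y i ω) * (1 - p) ^ n)) :
    ∀ᵐ ω ∂P,
      ∃ c : ℝ, 0 < c ∧
        Tendsto (fun n => B n ω) atTop (nhds c) ∧
        ¬ Tendsto (fun n => B n ω) atTop atTop ∧
        ¬ Tendsto (fun n => B n ω) atTop (nhds 0) := by
  filter_upwards [ae_tendsto_sum_range_div hindep hident hint] with ω hω
  rw [hmean] at hω
  have lim : Tendsto (fun n => B n ω) atTop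
      (nhds (Real.exp (-θ₀) * (1 + θ₀) * (1 + θ₀))) := by
    refine (tendsto_poisson_geometric_bayesFactor hω).congr' ?_
    filter_upwards [eventually_gt_atTop 0] with n hn
    rw [hB, poisson_geometric_bayesFactor_eq hn]
  have limit_pos : 0 < Real.exp (-θ₀) * (1 + θ₀) * (1 + θ₀) := by positivity
  exact ⟨_, limit_pos, lim, not_tendsto_atTop_of_tendsto_nhds lim,
    fun lim_zero => limit_pos.ne' (tendsto_nhds_unique lim lim_zero)⟩

/-- Under the assumptions of Theorem 1 the Bayes factor based on the sufficient statistic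
is not consistent: almost surely it converges to a finite strictly positive constant, so it
neither tends to `∞` nor to `0`. -/
theorem bayes_factor_sufficient_statistic_inconsistent
    {Ω : Type*} [MeasurableSpace Ω] (P : Measure Ω) [IsProbabilityMeasure P]
    (y : ℕ → Ω → ℕ)
    (hmeas : ∀ i, Measurable (y i))
    (hindep : iIndepFun y P)
    (hident : ∀ i, IdentDistrib (y i) (y 0) P P)
    (hint : Integrable (fun ω => (y 0 ω : ℝ)) P)
    (θ₀ : ℝ) (hθ₀ : 0 < θ₀) (hmean : ∫ ω, (y 0 ω : ℝ) ∂P = θ₀)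
    (B : ℕ → Ω → ℝ)
    (hB : ∀ n ω, B n ω =
      (∫ lam in Set.Ioi (0 : ℝ),
          Real.exp (-(n * lam)) * (n * lam) ^ (∑ i ∈ Finset.range n, y i ω) /
            (Nat.factorial (∑ i ∈ Finset.range n, y i ω) : ℝ) * Real.exp (-lam)) /
      (∫ p in (0 : ℝ)..1,
          (Nat.choose (n + (∑ i ∈ Finset.range n, y i ω) - 1)
              (∑ i ∈ Finset.range n, y i ω) : ℝ) *
            p ^ (∑ i ∈ Finset.range n, y i ω) * (1 - p) ^ n)) :
    ∀ᵐ ω ∂P,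
      ∃ c : ℝ, 0 < c ∧
        Tendsto (fun n => B n ω) atTop (nhds c) ∧
        ¬ Tendsto (fun n => B n ω) atTop atTop ∧
        ¬ Tendsto (fun n => B n ω) atTop (nhds 0) :=
  bayes_factor_sufficient_statistic_inconsistent_general P y hindep hident hint θ₀ hθ₀ hmean B hB
end

section
/- (Theorem 2.) Consider model selection between model 1: y_i i.i.d. 𝒩(μ, σ_1²) and model 2: y_i i.i.d. 𝒩(μ, σ_2²), with σ_1, σ_2 > 0 given and common prior μ ~ 𝒩(0, a²), a > 0, when the observed data y_1, y_2, … are i.i.d. real random variables with finite mean (and variance). Let ȳ_n = (1/n)Σ_{i=1}^n y_i and let B_{12}^η(n, ȳ_n) = √((a² + σ_2²/n)/(a² + σ_1²/n)) · exp((ȳ_n²/2)(1/(a² + σ_2²/n) − 1/(a² + σ_1²/n))) be the Bayes factor based on the sufficient statistic ȳ_n. Then, almost surely, lim_{n→∞} B_{12}^η(n, ȳ_n) = 1. -/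
/-!
As `n → ∞` both marginal variances `a² + σᵢ²/n` of `ȳₙ` tend to the prior variance `a²`, so the
Bayes factor tends to `1` along every convergent sequence of sample means; by the strong law of
large numbers `ȳₙ` converges almost surely.
-/

open MeasureTheory Filter ProbabilityTheory Real Topology

/-- `B₁₂^η(n, ȳ)`: the ratio of the marginal densities `𝒩(0, a² + σ₁²/n)` and `𝒩(0, a² + σ₂²/n)`
of the sample mean, evaluated at `ȳ`. -/
noncomputable def gaussianMeanBayesFactor (a σ₁ σ₂ : ℝ) (n : ℕ) (x : ℝ) : ℝ :=
  √((a ^ 2 + σ₂ ^ 2 / n) / (a ^ 2 + σ₁ ^ 2 / n)) *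
    exp ((x ^ 2 / 2) * (1 / (a ^ 2 + σ₂ ^ 2 / n) - 1 / (a ^ 2 + σ₁ ^ 2 / n)))

lemma tendsto_const_add_div_natCast (c s : ℝ) :
    Tendsto (fun n : ℕ => c + s / n) atTop (𝓝 c) := by
  simpa using tendsto_const_nhds.add (tendsto_const_div_atTop_nhds_zero_nat s)

lemma tendsto_gaussianMeanBayesFactor {a : ℝ} (ha : a ≠ 0) (σ₁ σ₂ : ℝ) {x : ℕ → ℝ} {m : ℝ}
    (hx : Tendsto x atTop (𝓝 m)) :
    Tendsto (fun n => gaussianMeanBayesFactor a σ₁ σ₂ n (x n)) atTop (𝓝 1) := by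
  have ha2 : a ^ 2 ≠ 0 := pow_ne_zero 2 ha
  have hv₁ := tendsto_const_add_div_natCast (a ^ 2) (σ₁ ^ 2)
  have hv₂ := tendsto_const_add_div_natCast (a ^ 2) (σ₂ ^ 2)
  have hratio := (hv₂.div hv₁ ha2).sqrt
  have hexponent := ((hx.pow 2).div_const 2).mul
    ((tendsto_const_nhds (x := (1 : ℝ))).div hv₂ ha2 |>.sub <|
      (tendsto_const_nhds (x := (1 : ℝ))).div hv₁ ha2)
  simpa [gaussianMeanBayesFactor, ha2] using hratio.mul hexponent.rexp

theorem normal_bayes_factor_inconsistent_general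
    {Ω : Type*} [MeasurableSpace Ω] (P : Measure Ω)
    (y : ℕ → Ω → ℝ)
    (hindep : iIndepFun y P)
    (hident : ∀ i, IdentDistrib (y i) (y 0) P P)
    (hint : Integrable (y 0) P)
    (σ₁ σ₂ a : ℝ) (ha : 0 < a) :
    ∀ᵐ ω ∂P,
      Tendsto
        (fun n : ℕ =>
          Real.sqrt ((a ^ 2 + σ₂ ^ 2 / n) / (a ^ 2 + σ₁ ^ 2 / n)) *
            Real.exp ((((∑ i ∈ Finset.range n, y i ω) / n) ^ 2 / 2) *
              (1 / (a ^ 2 + σ₂ ^ 2 / n) - 1 / (a ^ 2 + σ₁ ^ 2 / n))))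
        atTop (nhds 1) := by
  filter_upwards [strong_law_ae_real y hint (fun i j hij => hindep.indepFun hij) hident]
    with ω hmean
  exact tendsto_gaussianMeanBayesFactor ha.ne' σ₁ σ₂ hmean

/-- Theorem 2: for i.i.d. real data with finite mean and variance, the Bayes factor based
on the sufficient statistic `ȳₙ`, between the models `𝒩(μ, σ₁²)` and `𝒩(μ, σ₂²)` with
common prior `μ ~ 𝒩(0, a²)`, converges almost surely to `1`. -/
theorem normal_bayes_factor_inconsistent
    {Ω : Type*} [MeasurableSpace Ω] (P : Measure Ω) [IsProbabilityMeasure P]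
    (y : ℕ → Ω → ℝ)
    (hmeas : ∀ i, Measurable (y i))
    (hindep : iIndepFun y P)
    (hident : ∀ i, IdentDistrib (y i) (y 0) P P)
    (hint : Integrable (y 0) P)
    (hvar : MemLp (y 0) 2 P)
    (σ₁ σ₂ a : ℝ) (hσ₁ : 0 < σ₁) (hσ₂ : 0 < σ₂) (ha : 0 < a) :
    ∀ᵐ ω ∂P,
      Tendsto
        (fun n : ℕ =>
          Real.sqrt ((a ^ 2 + σ₂ ^ 2 / n) / (a ^ 2 + σ₁ ^ 2 / n)) *
            Real.exp ((((∑ i ∈ Finset.range n, y i ω) / n) ^ 2 / 2) *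
              (1 / (a ^ 2 + σ₂ ^ 2 / n) - 1 / (a ^ 2 + σ₁ ^ 2 / n))))
        atTop (nhds 1) :=
  normal_bayes_factor_inconsistent_general P y hindep hident hint σ₁ σ₂ a ha
end
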